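/- arXiv:1312.2114 — 2 statements merged into one kernel-verified Lean document; each statement's English description precedes it below -/
import Mathlib

section
/- Let n ≥ 1, d ≥ 2 be integers and let a ∈ 𝒵_n be written as a = Σ_{v∈ℤ/n, v≠0} a_v e_v with integer coefficients a_v. Then the class of a in Σ(n,d) lies in the embedded image of S(n,d) (equivalently, a ∈ (x−1)·𝒵_n + ℰ_{n,d}) if and only if Σ_{v} v·a_v ≡ 0 (mod n). -/
open Polynomial Matrix

noncomputable section

/-- `Rq n` is the ring `ℤ[x]/(x^n - 1)`. -/
abbrev Rq (n : ℕ) : Type := Polynomial ℤ ⧸ Ideal.span ({X ^ n - 1} : Set (Polynomial ℤ))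

/-- Projection `ℤ[x] → ℤ[x]/(x^n-1)`. -/
def mkR (n : ℕ) : Polynomial ℤ →ₐ[ℤ] Rq n := Ideal.Quotient.mkₐ ℤ _

/-- Evaluation at 1, `ℤ[x]/(x^n-1) → ℤ`. -/
def evalOne (n : ℕ) : Rq n →ₐ[ℤ] ℤ :=
  Ideal.Quotient.liftₐ _ (aeval (1 : ℤ)) (by
    intro a ha
    have h : Ideal.span ({X ^ n - 1} : Set (Polynomial ℤ)) ≤
        RingHom.ker (aeval (1 : ℤ) : Polynomial ℤ →ₐ[ℤ] ℤ) := by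
      rw [Ideal.span_le]
      rintro b ⟨rfl⟩
      simp [RingHom.mem_ker]
    exact h ha)

/-- `𝒵_n`, the ℤ-submodule of elements of `ℤ[x]/(x^n-1)` vanishing at 1. -/
def Znd (n : ℕ) : Submodule ℤ (Rq n) := LinearMap.ker (evalOne n).toLinearMap

/-- `e_v = x^v - 1`. -/
def eR (n : ℕ) (v : ZMod n) : Rq n := mkR n (X ^ v.val - 1)

lemma eR_mem (n : ℕ) (v : ZMod n) : eR n v ∈ Znd n := by
  simp [Znd, eR, evalOne, mkR, LinearMap.mem_ker]
  exact sub_eq_zero.mpr (by simp [Ideal.Quotient.liftₐ, Ideal.Quotient.lift_mk])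

/-- `e_v` as an element of `𝒵_n`. -/
def eZ (n : ℕ) (v : ZMod n) : Znd n := ⟨eR n v, eR_mem n v⟩

/-- `ε_v = d·e_v − e_{d·v}`. -/
def epsR (n d : ℕ) (v : ZMod n) : Rq n := (d : ℤ) • eR n v - eR n ((d : ZMod n) * v)

/-- `ℰ_{n,d}`: the ℤ-submodule generated by the `ε_v`, `v ≠ 0`. -/
def Esub (n d : ℕ) : Submodule ℤ (Rq n) :=
  Submodule.span ℤ {x | ∃ v : ZMod n, v ≠ 0 ∧ x = epsR n d v}

/-- The sand dune group `Σ(n,d) = 𝒵_n / ℰ_{n,d}` of `DB(n,d)`. -/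
abbrev SigmaGrp (n d : ℕ) : Type :=
  Znd n ⧸ (Esub n d).comap (Znd n).subtype

/-- Projection `𝒵_n → Σ(n,d)`. -/
def sigmaMk (n d : ℕ) (a : Znd n) : SigmaGrp n d := Submodule.Quotient.mk a

/-- `f_v = d·x^v − x^{d·v}(1 + x + ⋯ + x^{d−1})`. -/
def fR (n d : ℕ) (v : ZMod n) : Rq n :=
  mkR n ((d : Polynomial ℤ) * X ^ v.val -
    X ^ (((d : ZMod n) * v).val) * (∑ i ∈ Finset.range d, X ^ i))

/-- The `R`-span of the `f_v`, `v ≠ 0`, where `R = ℤ[x]/(x^n-1)`. -/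
def Fsub (n d : ℕ) : Submodule (Rq n) (Rq n) :=
  Submodule.span (Rq n) {x | ∃ v : ZMod n, v ≠ 0 ∧ x = fR n d v}

/-- The sandpile (critical) group `S(n,d)` of the generalized de Bruijn graph `DB(n,d)`:
the quotient of `𝒵_n` by the `R`-span of the `f_v`, `v ≠ 0`. -/
abbrev SGrp (n d : ℕ) : Type :=
  Znd n ⧸ ((Fsub n d).restrictScalars ℤ).comap (Znd n).subtype

/-- The element `x - 1` of `ℤ[x]/(x^n-1)`. -/
def xSubOne (n : ℕ) : Rq n := mkR n (X - 1)

/-- The submodule `(x-1)·𝒵_n + ℰ_{n,d}` of `ℤ[x]/(x^n-1)`. -/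
def SImageSub (n d : ℕ) : Submodule ℤ (Rq n) :=
  (Znd n).map (LinearMap.mulLeft ℤ (xSubOne n)) ⊔ Esub n d

/-- The embedded image `((x-1)·𝒵_n + ℰ_{n,d})/ℰ_{n,d}` of `S(n,d)` in `Σ(n,d)`. -/
def SImage (n d : ℕ) : Submodule ℤ (SigmaGrp n d) :=
  ((SImageSub n d).comap (Znd n).subtype).map ((Esub n d).comap (Znd n).subtype).mkQ

/-! The linear map `D : ℤ[x]/(x^n-1) → ℤ/n`, `p ↦ p'(1) mod n`, is the `ε`-coefficient of the ring
map `x ↦ 1 + ε` into the dual numbers over `ℤ/n`; hence `D((x-1)c) = c(1) mod n`. Every element of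
`𝒵_n` has the form `(x-1)c`, and `n(x-1) = (x-1)(n - (1 + x + ⋯ + x^{n-1}))` lies in `(x-1)𝒵_n`,
so `(x-1)𝒵_n` is exactly the kernel of `D` on `𝒵_n`. Since `D(e_v) = v`, every `ε_v` lies in
that kernel, so `ℰ_{n,d} ⊆ (x-1)𝒵_n`, and `D(∑ a_v e_v) = ∑ v a_v`. -/

open DualNumber TrivSqZeroExt

def toDualNumber (n : ℕ) : Rq n →ₐ[ℤ] DualNumber (ZMod n) :=
  Ideal.Quotient.liftₐ _ (aeval (1 + ε)) fun p hp => by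
    obtain ⟨q, rfl⟩ := Ideal.mem_span_singleton'.mp hp
    have h : (1 + ε : DualNumber (ZMod n)) ^ n = 1 := by ext <;> simp
    simp [h]

lemma toDualNumber_mkR (n : ℕ) (p : ℤ[X]) : toDualNumber n (mkR n p) = aeval (1 + ε) p := rfl

lemma evalOne_mkR (n : ℕ) (p : ℤ[X]) : evalOne n (mkR n p) = p.eval 1 := by
  show aeval (1 : ℤ) p = _
  exact congrFun (coe_aeval_eq_eval 1) p

lemma toDualNumber_xSubOne (n : ℕ) : toDualNumber n (xSubOne n) = ε := by
  simp [xSubOne, toDualNumber_mkR]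

lemma fst_toDualNumber (n : ℕ) (z : Rq n) : (toDualNumber n z).fst = evalOne n z := by
  obtain ⟨p, rfl⟩ := Ideal.Quotient.mkₐ_surjective ℤ _ z
  rw [← mkR, toDualNumber_mkR, evalOne_mkR, ← eq_intCast (algebraMap ℤ (ZMod n)),
    ← aeval_algebraMap_apply_eq_algebraMap_eval, map_one]
  have h := aeval_algHom_apply (fstHom ℤ (ZMod n) (ZMod n)) (1 + ε) p
  simp only [fstHom_apply, fst_add, fst_one, fst_eps, add_zero] at h
  exact h.symm

lemma exists_eq_xSubOne_mul {n : ℕ} {z : Rq n} (hz : z ∈ Znd n) : ∃ c, z = xSubOne n * c := by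
  obtain ⟨p, rfl⟩ := Ideal.Quotient.mkₐ_surjective ℤ _ z
  rw [← mkR] at hz ⊢
  have hroot : p.IsRoot 1 := by simpa [Znd, evalOne_mkR] using hz
  obtain ⟨q, rfl⟩ := Polynomial.dvd_iff_isRoot.mpr hroot
  exact ⟨mkR n q, by simp [xSubOne]⟩

def derivAtOne (n : ℕ) : Rq n →ₗ[ℤ] ZMod n :=
  (sndHom (ZMod n) (ZMod n)).restrictScalars ℤ ∘ₗ (toDualNumber n).toLinearMap

lemma derivAtOne_apply (n : ℕ) (z : Rq n) : derivAtOne n z = (toDualNumber n z).snd := rfl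

lemma derivAtOne_xSubOne_mul (n : ℕ) (c : Rq n) :
    derivAtOne n (xSubOne n * c) = evalOne n c := by
  simp [derivAtOne_apply, toDualNumber_xSubOne, fst_toDualNumber]

lemma derivAtOne_eR (n : ℕ) [NeZero n] (v : ZMod n) : derivAtOne n (eR n v) = v := by
  simp [derivAtOne_apply, eR, toDualNumber_mkR]

def xSubOneZnd (n : ℕ) : Submodule ℤ (Rq n) := (Znd n).map (LinearMap.mulLeft ℤ (xSubOne n))

lemma xSubOne_mul_sub_smul_mem (n : ℕ) (c : Rq n) :
    xSubOne n * c - evalOne n c • xSubOne n ∈ xSubOneZnd n := by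
  refine ⟨c - algebraMap ℤ (Rq n) (evalOne n c), by simp [Znd], ?_⟩
  simp [mul_sub, mul_comm]

lemma natCast_smul_xSubOne_mem (n : ℕ) : (n : ℤ) • xSubOne n ∈ xSubOneZnd n := by
  have h := xSubOne_mul_sub_smul_mem n (mkR n (∑ i ∈ Finset.range n, X ^ i))
  have hzero : xSubOne n * mkR n (∑ i ∈ Finset.range n, X ^ i) = 0 := by
    rw [xSubOne, ← map_mul, mul_geom_sum, mkR, Ideal.Quotient.mkₐ_eq_mk,
      Ideal.Quotient.eq_zero_iff_mem]
    exact Ideal.subset_span rfl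
  rw [hzero, evalOne_mkR] at h
  simpa [eval_finsetSum] using h

lemma mem_xSubOneZnd_iff {n : ℕ} {z : Rq n} (hz : z ∈ Znd n) :
    z ∈ xSubOneZnd n ↔ derivAtOne n z = 0 := by
  constructor
  · rintro ⟨w, hw, rfl⟩
    simpa [derivAtOne_xSubOne_mul] using congrArg (Int.cast : ℤ → ZMod n) hw
  · obtain ⟨c, rfl⟩ := exists_eq_xSubOne_mul hz
    rw [derivAtOne_xSubOne_mul, ZMod.intCast_zmod_eq_zero_iff_dvd]
    rintro ⟨m, hm⟩
    have h := add_mem (xSubOne_mul_sub_smul_mem n c)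
      (Submodule.smul_mem _ m (natCast_smul_xSubOne_mem n))
    rwa [hm, smul_smul, mul_comm m, sub_add_cancel] at h

lemma epsR_mem_Znd (n d : ℕ) (v : ZMod n) : epsR n d v ∈ Znd n :=
  sub_mem (Submodule.smul_mem _ _ (eR_mem n v)) (eR_mem n _)

lemma derivAtOne_epsR (n d : ℕ) [NeZero n] (v : ZMod n) : derivAtOne n (epsR n d v) = 0 := by
  rw [epsR, map_sub, map_zsmul, derivAtOne_eR, derivAtOne_eR, natCast_zsmul, nsmul_eq_mul,
    sub_self]

lemma SImageSub_eq_xSubOneZnd (n d : ℕ) [NeZero n] : SImageSub n d = xSubOneZnd n := by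
  refine sup_eq_left.mpr (Submodule.span_le.mpr ?_)
  rintro _ ⟨v, -, rfl⟩
  exact (mem_xSubOneZnd_iff (epsR_mem_Znd n d v)).mpr (derivAtOne_epsR n d v)

lemma derivAtOne_sum_smul_eR (n : ℕ) [NeZero n] (A : ZMod n → ℤ) :
    derivAtOne n (∑ v : ZMod n, A v • eR n v) =
      ((∑ v : ZMod n, (v.val : ℤ) * A v : ℤ) : ZMod n) := by
  rw [map_sum, Int.cast_sum]
  refine Finset.sum_congr rfl fun v _ => ?_
  rw [map_zsmul, derivAtOne_eR, zsmul_eq_mul, Int.cast_mul, Int.cast_natCast,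
    ZMod.natCast_zmod_val, mul_comm]

theorem mem_embedded_sandpile_iff_general (n d : ℕ) [NeZero n]
    (a : Znd n) (A : ZMod n → ℤ)
    (ha : (a : Rq n) = ∑ v : ZMod n, A v • eR n v) :
    (a : Rq n) ∈ SImageSub n d ↔ (n : ℤ) ∣ ∑ v : ZMod n, (v.val : ℤ) * A v := by
  rw [SImageSub_eq_xSubOneZnd, mem_xSubOneZnd_iff a.2, ha, derivAtOne_sum_smul_eR,
    ZMod.intCast_zmod_eq_zero_iff_dvd]

/-- Theorem: `a = Σ a_v e_v ∈ 𝒵_n` lies in the embedded copy `(x−1)𝒵_n + ℰ_{n,d}`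
of `S(n,d)` iff `Σ v·a_v ≡ 0 (mod n)`. -/
theorem mem_embedded_sandpile_iff (n d : ℕ) (hn : 1 ≤ n) (hd : 2 ≤ d) [NeZero n]
    (a : Znd n) (A : ZMod n → ℤ) (hA0 : A 0 = 0)
    (ha : (a : Rq n) = ∑ v : ZMod n, A v • eR n v) :
    (a : Rq n) ∈ SImageSub n d ↔ (n : ℤ) ∣ ∑ v : ZMod n, (v.val : ℤ) * A v :=
  mem_embedded_sandpile_iff_general n d a A ha

end
end

section
/- Let n ≥ 1 and let p be a prime. Every matrix in C(n,p) has the all-ones vector 𝟙 as an eigenvector, and the map C'(n,p) × 𝔽_p^* → C(n,p) given by (g, λ) ↦ λ·g is a group isomorphism; that is, C(n,p) is the internal direct product of C'(n,p) and the group of nonzero scalar matrices {λI : λ ∈ 𝔽_p^*}. -/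
open Polynomial Matrix

noncomputable section

variable (n p : ℕ)

/-- A matrix is circulant iff it equals `circulant a` for some vector `a`;
equivalently, iff it has the form `a_1 Q + ⋯ + a_n Q^n`. -/
def IsCircu [NeZero n] [NeZero p] (M : Matrix (ZMod n) (ZMod n) (ZMod p)) : Prop :=
  ∃ a : ZMod n → ZMod p, M = Matrix.circulant a

lemma isCircu_one [NeZero n] [NeZero p] : IsCircu n p 1 :=
  ⟨Pi.single 0 1, (Matrix.circulant_single_one _ _).symm⟩

lemma isCircu_mul [NeZero n] [NeZero p] {M N : Matrix (ZMod n) (ZMod n) (ZMod p)}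
    (hM : IsCircu n p M) (hN : IsCircu n p N) : IsCircu n p (M * N) := by
  obtain ⟨a, rfl⟩ := hM; obtain ⟨b, rfl⟩ := hN
  exact ⟨_, Matrix.circulant_mul a b⟩

lemma isCircu_pow [NeZero n] [NeZero p] {M : Matrix (ZMod n) (ZMod n) (ZMod p)}
    (hM : IsCircu n p M) (k : ℕ) : IsCircu n p (M ^ k) := by
  induction k with
  | zero => simpa using isCircu_one n p
  | succ k ih => rw [pow_succ]; exact isCircu_mul n p ih hM

/-- `C(n,p)`: the group of invertible circulant `n × n` matrices over `𝔽_p`. -/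
def Cgrp [NeZero n] [NeZero p] : Subgroup (Matrix (ZMod n) (ZMod n) (ZMod p))ˣ where
  carrier := {u | IsCircu n p u.val}
  one_mem' := isCircu_one n p
  mul_mem' {u v} hu hv := isCircu_mul n p hu hv
  inv_mem' := by
    intro u hu
    haveI : Finite (Matrix (ZMod n) (ZMod n) (ZMod p)) :=
      inferInstanceAs (Finite (ZMod n → ZMod n → ZMod p))
    haveI : Finite (Matrix (ZMod n) (ZMod n) (ZMod p))ˣ :=
      Finite.of_injective (Units.val) (fun _ _ h => Units.ext h)
    have h1 : u⁻¹ = u ^ (orderOf u - 1) := by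
      refine inv_eq_of_mul_eq_one_right ?_
      rw [← pow_succ', Nat.sub_add_cancel (orderOf_pos u), pow_orderOf_eq_one]
    rw [Set.mem_setOf_eq, h1, Units.val_pow_eq_pow_val]
    exact isCircu_pow n p hu _

instance [NeZero n] [NeZero p] : CommGroup (Cgrp n p) :=
  { (inferInstance : Group (Cgrp n p)) with
    mul_comm := by
      rintro ⟨u, a, ha⟩ ⟨v, b, hb⟩
      refine Subtype.ext (Units.ext ?_)
      show u.val * v.val = v.val * u.val
      rw [ha, hb, Matrix.circulant_mul_comm] }

/-- `C'(n,p)`: the subgroup of `C(n,p)` of matrices fixing the all-ones vector. -/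
def Cgrp' [NeZero n] [NeZero p] : Subgroup (Cgrp n p) where
  carrier := {g | (g : (Matrix (ZMod n) (ZMod n) (ZMod p))ˣ).val *ᵥ (fun _ => 1) = fun _ => 1}
  one_mem' := by
    show (((1 : Cgrp n p) : (Matrix (ZMod n) (ZMod n) (ZMod p))ˣ)).val *ᵥ _ = _
    simp [Matrix.one_mulVec]
  mul_mem' := by
    intro a b ha hb
    show ((a : (Matrix (ZMod n) (ZMod n) (ZMod p))ˣ).val * _) *ᵥ _ = _
    rw [← Matrix.mulVec_mulVec]
    rw [Set.mem_setOf_eq] at ha hb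
    rw [hb, ha]
  inv_mem' := by
    intro a ha
    rw [Set.mem_setOf_eq] at ha ⊢
    have hco : ((a⁻¹ : Cgrp n p) : (Matrix (ZMod n) (ZMod n) (ZMod p))ˣ)
        = ((a : (Matrix (ZMod n) (ZMod n) (ZMod p))ˣ))⁻¹ := rfl
    have key : ((a⁻¹ : Cgrp n p) : (Matrix (ZMod n) (ZMod n) (ZMod p))ˣ).val *
        ((a : (Matrix (ZMod n) (ZMod n) (ZMod p))ˣ)).val = 1 := by
      rw [hco]; exact Units.inv_mul _
    conv_lhs => rw [← ha]
    rw [Matrix.mulVec_mulVec, key, Matrix.one_mulVec]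

lemma single_shift [NeZero n] [NeZero p] (a b i : ZMod n) :
    (Pi.single a (1 : ZMod p) : ZMod n → ZMod p) (i - b)
      = (Pi.single (a + b) (1 : ZMod p) : ZMod n → ZMod p) i := by
  simp [Pi.single_apply, sub_eq_iff_eq_add]

/-- The cyclic-shift permutation matrix `Q_n` (of the cycle `(1,2,…,n)`), as a unit. -/
def QUnit [NeZero n] [NeZero p] : (Matrix (ZMod n) (ZMod n) (ZMod p))ˣ where
  val := Matrix.circulant (Pi.single 1 1)
  inv := Matrix.circulant (Pi.single (-1) 1)
  val_inv := by
    rw [Matrix.circulant_mul, Matrix.mulVec_single]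
    have h : (fun i => Matrix.circulant (Pi.single 1 (1 : ZMod p)) i (-1 : ZMod n) * 1)
        = Pi.single (0 : ZMod n) (1 : ZMod p) := by
      funext i
      rw [mul_one, Matrix.circulant_apply, single_shift, add_neg_cancel]
    rw [show MulOpposite.op (1 : ZMod p) • (Matrix.circulant (Pi.single 1 (1 : ZMod p))).col (-1 : ZMod n)
        = fun i => Matrix.circulant (Pi.single 1 (1 : ZMod p)) i (-1 : ZMod n) * 1 from by
      funext i; simp [Matrix.col]]
    rw [h, Matrix.circulant_single_one]
  inv_val := by
    rw [Matrix.circulant_mul, Matrix.mulVec_single]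
    have h : (fun i => Matrix.circulant (Pi.single (-1 : ZMod n) (1 : ZMod p)) i (1 : ZMod n) * 1)
        = Pi.single (0 : ZMod n) (1 : ZMod p) := by
      funext i
      rw [mul_one, Matrix.circulant_apply, single_shift, neg_add_cancel]
    rw [show MulOpposite.op (1 : ZMod p) • (Matrix.circulant (Pi.single (-1 : ZMod n) (1 : ZMod p))).col (1 : ZMod n)
        = fun i => Matrix.circulant (Pi.single (-1 : ZMod n) (1 : ZMod p)) i (1 : ZMod n) * 1 from by
      funext i; simp [Matrix.col]]
    rw [h, Matrix.circulant_single_one]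

/-- `Q_n` as an element of `C(n,p)`. -/
def Qelem [NeZero n] [NeZero p] : Cgrp n p := ⟨QUnit n p, ⟨Pi.single 1 1, rfl⟩⟩

lemma Qelem_mem' [NeZero n] [NeZero p] : Qelem n p ∈ Cgrp' n p := by
  show (Matrix.circulant (Pi.single (1 : ZMod n) (1 : ZMod p))) *ᵥ (fun _ => 1) = fun _ => 1
  funext i
  simp only [Matrix.mulVec, dotProduct, Matrix.circulant_apply]
  rw [Fintype.sum_equiv (Equiv.subLeft i)
    (fun x => (Pi.single (1 : ZMod n) (1 : ZMod p) : ZMod n → ZMod p) (i - x) * 1)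
    (fun j => (Pi.single (1 : ZMod n) (1 : ZMod p) : ZMod n → ZMod p) j * 1)
    (fun x => rfl)]
  simp [Finset.sum_pi_single']

/-- `Q_n` as an element of `C'(n,p)`. -/
def Qelem' [NeZero n] [NeZero p] : Cgrp' n p := ⟨Qelem n p, Qelem_mem' n p⟩


/-- The scalar matrix `λ·I` as a unit, for `λ ∈ 𝔽_p^*`. -/
def scalarUnit (n p : ℕ) [NeZero n] [NeZero p] (μ : (ZMod p)ˣ) :
    (Matrix (ZMod n) (ZMod n) (ZMod p))ˣ :=
  Units.map (Matrix.scalar (ZMod n) : ZMod p →+* Matrix (ZMod n) (ZMod n) (ZMod p)).toMonoidHom μ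

lemma scalarUnit_mem (n p : ℕ) [NeZero n] [NeZero p] (μ : (ZMod p)ˣ) :
    scalarUnit n p μ ∈ Cgrp n p :=
  ⟨Pi.single 0 μ.val, by rw [Matrix.circulant_single]; rfl⟩

/-- The scalar matrix `λ·I` as an element of `C(n,p)`. -/
def scalarElem (n p : ℕ) [NeZero n] [NeZero p] (μ : (ZMod p)ˣ) : Cgrp n p :=
  ⟨scalarUnit n p μ, scalarUnit_mem n p μ⟩

/-! A circulant matrix `circulant a` has all row sums equal to `∑ a`, so `𝟙` is an eigenvector of
every `g ∈ C(n,p)` and `g ↦ (g 𝟙)₀` is a character `χ : C(n,p) → 𝔽_p^*` with kernel `C'(n,p)`.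
The scalar matrices `λ ↦ λI` form a section of `χ`, and a group homomorphism with a section splits:
`(k, λ) ↦ λ k` is a bijection `ker χ × 𝔽_p^* → C(n,p)`, multiplicative since `C(n,p)` is abelian. -/

theorem Matrix.circulant_mulVec_ones {α ι : Type*} [NonAssocSemiring α] [Fintype ι] [AddGroup ι]
    (v : ι → α) : circulant v *ᵥ (fun _ => 1) = fun _ => ∑ j, v j := by
  funext i
  simp only [mulVec, dotProduct, circulant_apply, mul_one]
  exact Fintype.sum_equiv (Equiv.subLeft i) _ _ fun _ => rfl

theorem MonoidHom.bijective_mul_of_leftInverse {G H : Type*} [Group G] [Group H] {χ : G →* H}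
    {s : H →* G} (hs : Function.LeftInverse χ s) {K : Subgroup G} (hK : χ.ker = K) :
    Function.Bijective fun x : K × H => s x.2 * (x.1 : G) := by
  subst hK
  have hχ (x : χ.ker × H) : χ (s x.2 * x.1) = x.2 := by
    rw [map_mul, hs, x.1.2, mul_one]
  refine ⟨fun x y hxy => ?_, fun g => ⟨(⟨(s (χ g))⁻¹ * g, ?_⟩, χ g), ?_⟩⟩
  · dsimp only at hxy
    have h2 : x.2 = y.2 := by simpa only [hχ] using congrArg χ hxy
    rw [h2, mul_right_inj] at hxy
    exact Prod.ext (Subtype.ext hxy) h2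
  · rw [MonoidHom.mem_ker, map_mul, map_inv, hs, inv_mul_cancel]
  · exact mul_inv_cancel_left _ _

theorem MonoidHom.map_snd_mul_fst_mul {G H : Type*} [CommGroup G] [MulOneClass H] {K : Subgroup G}
    (s : H →* G) (a b : K × H) :
    s (a * b).2 * ((a * b).1 : G) = s a.2 * a.1 * (s b.2 * b.1) := by
  rw [Prod.snd_mul, Prod.fst_mul, map_mul, Subgroup.coe_mul]
  exact mul_mul_mul_comm _ _ _ _

section

variable [NeZero n] [NeZero p]

theorem IsCircu.mulVec_ones {M : Matrix (ZMod n) (ZMod n) (ZMod p)} (hM : IsCircu n p M) :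
    M *ᵥ (fun _ => 1) = fun _ => (M *ᵥ fun _ => 1) 0 := by
  obtain ⟨a, rfl⟩ := hM
  rw [circulant_mulVec_ones]

def onesEigenvalue : Cgrp n p →* ZMod p where
  toFun g := (g.val.val *ᵥ fun _ => 1) 0
  map_one' := by simp
  map_mul' g h := by
    have hh : h.val.val *ᵥ (fun _ => 1) = (h.val.val *ᵥ fun _ => 1) 0 • fun _ => 1 := by
      rw [IsCircu.mulVec_ones n p h.2]
      funext
      rw [Pi.smul_apply, smul_eq_mul, mul_one]
    change ((g.val.val * h.val.val) *ᵥ _) 0 = _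
    conv_lhs => rw [← mulVec_mulVec, hh, mulVec_smul, Pi.smul_apply, smul_eq_mul, mul_comm]

theorem mulVec_ones_eq_onesEigenvalue (g : Cgrp n p) :
    g.val.val *ᵥ (fun _ => 1) = fun _ => onesEigenvalue n p g :=
  IsCircu.mulVec_ones n p g.2

theorem ker_onesEigenvalue_toHomUnits : (onesEigenvalue n p).toHomUnits.ker = Cgrp' n p := by
  ext g
  rw [MonoidHom.mem_ker, Units.ext_iff]
  change _ ↔ g.val.val *ᵥ _ = _
  rw [mulVec_ones_eq_onesEigenvalue]
  exact Function.const_inj.symm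

def scalarHom : (ZMod p)ˣ →* Cgrp n p :=
  MonoidHom.codRestrict
    (Units.map (scalar (ZMod n) : ZMod p →+* Matrix (ZMod n) (ZMod n) (ZMod p)).toMonoidHom)
    (Cgrp n p) (scalarUnit_mem n p)

theorem onesEigenvalue_scalarHom (μ : (ZMod p)ˣ) :
    (onesEigenvalue n p).toHomUnits (scalarHom n p μ) = μ := by
  ext
  change (scalar (ZMod n) (μ : ZMod p) *ᵥ fun _ => 1) 0 = μ
  rw [scalar_apply, mulVec_diagonal, mul_one]

end

theorem circulant_internal_direct_product_general (n p : ℕ) [NeZero n] [NeZero p] :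
    (∀ g : Cgrp n p, ∃ μ : ZMod p,
      ((g : (Matrix (ZMod n) (ZMod n) (ZMod p))ˣ) : Matrix (ZMod n) (ZMod n) (ZMod p)) *ᵥ
        (fun _ => 1) = fun _ => μ) ∧
    (∀ a b : (Cgrp' n p) × (ZMod p)ˣ,
      scalarElem n p (a * b).2 * (((a * b).1 : Cgrp n p)) =
        (scalarElem n p a.2 * (a.1 : Cgrp n p)) *
          (scalarElem n p b.2 * (b.1 : Cgrp n p))) ∧
    Function.Bijective
      (fun x : (Cgrp' n p) × (ZMod p)ˣ => scalarElem n p x.2 * (x.1 : Cgrp n p)) :=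
  ⟨fun g => ⟨_, mulVec_ones_eq_onesEigenvalue n p g⟩,
    (scalarHom n p).map_snd_mul_fst_mul,
    MonoidHom.bijective_mul_of_leftInverse (onesEigenvalue_scalarHom n p)
      (ker_onesEigenvalue_toHomUnits n p)⟩

/-- Theorem: every invertible circulant matrix has the all-ones vector as an eigenvector,
and `(g, λ) ↦ λ·g` is a group isomorphism `C'(n,p) × 𝔽_p^* ≃ C(n,p)`. -/
theorem circulant_internal_direct_product (n p : ℕ) (hn : 1 ≤ n) [NeZero n]
    (hp : p.Prime) [NeZero p] :
    (∀ g : Cgrp n p, ∃ μ : ZMod p,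
      ((g : (Matrix (ZMod n) (ZMod n) (ZMod p))ˣ) : Matrix (ZMod n) (ZMod n) (ZMod p)) *ᵥ
        (fun _ => 1) = fun _ => μ) ∧
    (∀ a b : (Cgrp' n p) × (ZMod p)ˣ,
      scalarElem n p (a * b).2 * (((a * b).1 : Cgrp n p)) =
        (scalarElem n p a.2 * (a.1 : Cgrp n p)) *
          (scalarElem n p b.2 * (b.1 : Cgrp n p))) ∧
    Function.Bijective
      (fun x : (Cgrp' n p) × (ZMod p)ˣ => scalarElem n p x.2 * (x.1 : Cgrp n p)) :=
  circulant_internal_direct_product_general n p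

end
end
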